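/- arXiv:2602.03259 — 3 statements merged into one kernel-verified Lean document; each statement's English description precedes it below -/
import Mathlib

section
/- If φ is a strong odd coloring of the join C_n ∨ K̄_m (n ≥ 3, m ≥ 1), then the restriction of φ to the vertices of the cycle C_n is a 2-distance coloring of C_n, i.e., any two distinct vertices of C_n at distance at most 2 in C_n receive different colors. -/
open SimpleGraph

/-- A coloring `φ` of the vertices of `G` is a strong odd coloring if it is proper and,
for every vertex `v` and every color `c`, the number of neighbors of `v` colored `c`
is either zero or odd. -/
def IsStrongOddColoring {V α : Type*} (G : SimpleGraph V) (φ : V → α) : Prop :=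
  (∀ u v : V, G.Adj u v → φ u ≠ φ v) ∧
  ∀ (v : V) (c : α),
    {u : V | G.Adj v u ∧ φ u = c}.ncard = 0 ∨ Odd {u : V | G.Adj v u ∧ φ u = c}.ncard

/-- The strong odd chromatic number: the least `k` such that `G` admits a strong odd
coloring with `k` colors. -/
noncomputable def strongOddChromaticNumber {V : Type*} (G : SimpleGraph V) : ℕ :=
  sInf {k : ℕ | ∃ φ : V → Fin k, IsStrongOddColoring G φ}

/-- The join `G ∨ H` of two graphs: disjoint copies of `G` and `H` together with all
edges between them. -/
def joinGraph {V W : Type*} (G : SimpleGraph V) (H : SimpleGraph W) :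
    SimpleGraph (V ⊕ W) where
  Adj x y :=
    match x, y with
    | Sum.inl a, Sum.inl b => G.Adj a b
    | Sum.inl _, Sum.inr _ => True
    | Sum.inr _, Sum.inl _ => True
    | Sum.inr a, Sum.inr b => H.Adj a b
  symm := by refine ⟨?_⟩; rintro (a | a) (b | b) h <;> first | exact h.symm | trivial
  loopless := by refine ⟨?_⟩; rintro (a | a) h <;> first | exact G.irrefl h | exact H.irrefl h

/-- The wheel graph `W_n = C_n ∨ K_1`. -/
def wheelGraph (n : ℕ) : SimpleGraph (Fin n ⊕ Fin 1) :=
  joinGraph (cycleGraph n) (⊥ : SimpleGraph (Fin 1))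

/-- `G_n = C_n ∨ K̄_2`; the two vertices of `K̄_2` are `x_n = Sum.inr 0` and
`y_n = Sum.inr 1`. -/
def cycleJoinTwo (n : ℕ) : SimpleGraph (Fin n ⊕ Fin 2) :=
  joinGraph (cycleGraph n) (⊥ : SimpleGraph (Fin 2))

/-- The one point union of graphs `G` and `H`, obtained by identifying the vertex
`a` of `G` with the vertex `b` of `H` (the identified vertex is `Sum.inl a`). -/
def onePointUnion {V W : Type*} (G : SimpleGraph V) (H : SimpleGraph W) (a : V) (b : W) :
    SimpleGraph (V ⊕ {w : W // w ≠ b}) where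
  Adj x y :=
    match x, y with
    | Sum.inl u, Sum.inl v => G.Adj u v
    | Sum.inl u, Sum.inr v => u = a ∧ H.Adj b v.1
    | Sum.inr v, Sum.inl u => u = a ∧ H.Adj b v.1
    | Sum.inr u, Sum.inr v => H.Adj u.1 v.1
  symm := by
    refine ⟨?_⟩
    rintro (u | u) (v | v) h
    · exact h.symm
    · exact h
    · exact h
    · exact h.symm
  loopless := by
    refine ⟨?_⟩
    rintro (u | u) h
    · exact G.irrefl h
    · exact H.irrefl h

/-- `I_y(G_m, G_n)`: the one point union of `G_m = C_m ∨ K̄_2` and `G_n = C_n ∨ K̄_2`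
obtained by identifying the vertices `y_m` and `y_n`. -/
def Iy (m n : ℕ) :
    SimpleGraph ((Fin m ⊕ Fin 2) ⊕ {w : Fin n ⊕ Fin 2 // w ≠ Sum.inr 1}) :=
  onePointUnion (cycleJoinTwo m) (cycleJoinTwo n) (Sum.inr 1) (Sum.inr 1)

/-- A planar embedding of a graph `G`: an injective placement of the vertices in the
plane together with, for each edge, an arc (injective path) joining the images of its
endpoints, such that arcs do not pass through images of other vertices and two arcs of
distinct edges meet only in common endpoints. -/
structure PlanarEmbedding {V : Type*} (G : SimpleGraph V) where
  vmap : V → ℝ × ℝ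
  vmap_inj : Function.Injective vmap
  arc : ∀ u v : V, G.Adj u v → Path (vmap u) (vmap v)
  arc_symm : ∀ (u v : V) (h : G.Adj u v), arc v u h.symm = (arc u v h).symm
  arc_inj : ∀ (u v : V) (h : G.Adj u v), Function.Injective (arc u v h)
  arc_vertex : ∀ (u v : V) (h : G.Adj u v) (w : V),
    vmap w ∈ Set.range (arc u v h) → w = u ∨ w = v
  arc_disjoint : ∀ (u v u' v' : V) (h : G.Adj u v) (h' : G.Adj u' v'),
    s(u, v) ≠ s(u', v') →
    Set.range (arc u v h) ∩ Set.range (arc u' v' h') ⊆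
      ({vmap u, vmap v} ∩ {vmap u', vmap v'} : Set (ℝ × ℝ))

/-- A graph is planar if it admits a planar embedding. -/
def IsPlanar {V : Type*} (G : SimpleGraph V) : Prop :=
  Nonempty (PlanarEmbedding G)

/-! If `u`, `v` are at distance two on the cycle and `φ u = φ v`, pick a common cycle neighbour
`z`. Its only cycle neighbours are `u` and `v`, and the vertices of `K̄_m` are adjacent to `u`, so
their colours differ from `φ u`. Hence `z` has exactly two neighbours of colour `φ u`, an even
positive number. -/

namespace IsStrongOddColoring

variable {V α : Type*} {G : SimpleGraph V} {φ : V → α}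

lemma exists_third_adj (hφ : IsStrongOddColoring G φ) {z u v : V} (hu : G.Adj z u)
    (hv : G.Adj z v) (huv : u ≠ v) (hc : φ u = φ v) :
    ∃ w, G.Adj z w ∧ φ w = φ u ∧ w ≠ u ∧ w ≠ v := by
  by_contra! h
  have hset : {w | G.Adj z w ∧ φ w = φ u} = {u, v} := by
    ext w
    refine ⟨fun ⟨hw, hwc⟩ ↦ ?_, ?_⟩
    · by_contra hne
      simp only [Set.mem_insert_iff, Set.mem_singleton_iff, not_or] at hne
      exact hne.2 (h w hw hwc hne.1)
    · rintro (rfl | rfl)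
      exacts [⟨hu, rfl⟩, ⟨hv, hc.symm⟩]
  have := hφ.2 z (φ u)
  rw [hset, Set.ncard_pair huv] at this
  exact this.elim (by norm_num) (by decide)

end IsStrongOddColoring

lemma SimpleGraph.Preconnected.adj_or_exists_adj_adj_of_dist_le_two {V : Type*}
    {G : SimpleGraph V} (hG : G.Preconnected) {u v : V} (huv : u ≠ v) (h : G.dist u v ≤ 2) :
    G.Adj u v ∨ ∃ z, G.Adj u z ∧ G.Adj z v := by
  have hd : G.dist u v ≠ 0 := dist_ne_zero_iff_ne_and_reachable.2 ⟨huv, hG u v⟩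
  obtain ⟨p, hp⟩ := exists_walk_of_dist_ne_zero hd
  have hpos : p.length ≠ 0 := hp ▸ hd
  match p, hp ▸ h, hpos with
  | .nil, _, h0 => exact (h0 rfl).elim
  | .cons h .nil, _, _ => exact Or.inl h
  | .cons h (.cons h' .nil), _, _ => exact Or.inr ⟨_, h, h'⟩

lemma cycleGraph_eq_or_eq_of_adj {n : ℕ} {z u v w : Fin n} (hu : (cycleGraph n).Adj z u)
    (hv : (cycleGraph n).Adj z v) (huv : u ≠ v) (hw : (cycleGraph n).Adj z w) :
    w = u ∨ w = v := by
  rcases n with _ | _ | k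
  · exact z.elim0
  · exact (cycleGraph_one_adj hu).elim
  · rw [← mem_neighborSet, cycleGraph_neighborSet] at hu hv hw
    simp only [Set.mem_insert_iff, Set.mem_singleton_iff] at hu hv hw
    grind

theorem stmt_1_general (n m : ℕ) {α : Type*}
    (φ : Fin n ⊕ Fin m → α)
    (hφ : IsStrongOddColoring (joinGraph (cycleGraph n) (⊥ : SimpleGraph (Fin m))) φ) :
    ∀ u v : Fin n, u ≠ v → (cycleGraph n).dist u v ≤ 2 →
      φ (Sum.inl u) ≠ φ (Sum.inl v) := by
  intro u v huv hdist hc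
  rcases cycleGraph_preconnected.adj_or_exists_adj_adj_of_dist_le_two huv hdist with
    hadj | ⟨z, huz, hzv⟩
  · exact hφ.1 (.inl u) (.inl v) hadj hc
  obtain ⟨w, hzw, hwc, hwu, hwv⟩ :=
    hφ.exists_third_adj (z := .inl z) (u := .inl u) (v := .inl v) huz.symm hzv (by simpa) hc
  cases w with
  | inl a =>
    rcases cycleGraph_eq_or_eq_of_adj huz.symm hzv huv hzw with rfl | rfl
    exacts [hwu rfl, hwv rfl]
  | inr b => exact hφ.1 (.inl u) (.inr b) trivial hwc.symm

/-- A strong odd coloring of `C_n ∨ K̄_m` (`n ≥ 3`, `m ≥ 1`), restricted to the cycle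
`C_n`, is a 2-distance coloring of `C_n`: distinct cycle vertices at distance at most 2
in `C_n` receive different colors. -/
theorem stmt_1 (n m : ℕ) (hn : 3 ≤ n) (hm : 1 ≤ m) {α : Type*}
    (φ : Fin n ⊕ Fin m → α)
    (hφ : IsStrongOddColoring (joinGraph (cycleGraph n) (⊥ : SimpleGraph (Fin m))) φ) :
    ∀ u v : Fin n, u ≠ v → (cycleGraph n).dist u v ≤ 2 →
      φ (Sum.inl u) ≠ φ (Sum.inl v) :=
  stmt_1_general n m φ hφ
end

section
/- If n > 8 and n ≡ 1 or 5 (mod 6), then the strong odd chromatic number of the wheel W_n = C_n ∨ K_1 equals 6. -/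
open SimpleGraph

/-!
The hub is adjacent to every rim vertex, so its colour is absent from the rim, and a strong odd
colouring of `W_n` amounts to a colouring `f` of the rim `C_n` in which vertices at distance at
most two get distinct colours (each rim vertex has just two rim neighbours), all of whose colour
classes have odd size, plus one more colour for the hub.

Lower bound: summing the odd class sizes, the number of rim colours has the parity of `n`, so it
is odd. With at most three rim colours every window `f i, f (i + 1), f (i + 2)` uses all of them,
forcing `f (i + 3) = f i`; as `3 ∤ n` the colouring is then constant, which is absurd. Hence the
rim needs five colours and the wheel six.

Upper bound: colour the rim `(012)^(2k)` followed by `03124` when `n ≡ 5` and by `4014234` when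
`n ≡ 1 (mod 6)`. The periodic part contains each of `0, 1, 2` an even number of times, so the
parities of the classes are those of the tail, which are odd.
-/

open Finset Function
open scoped Fin.CommRing

section Cone

variable {V W α : Type*} {G : SimpleGraph V} {φ : V ⊕ W → α}

lemma ncard_joinGraph_bot_neighbors_inr (w : W) (c : α) :
    {u | (joinGraph G (⊥ : SimpleGraph W)).Adj (.inr w) u ∧ φ u = c}.ncard =
      {v | φ (.inl v) = c}.ncard := by
  have : {u | (joinGraph G (⊥ : SimpleGraph W)).Adj (.inr w) u ∧ φ u = c} =
      Sum.inl '' {v | φ (.inl v) = c} := by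
    ext (u | u) <;> simp [joinGraph]
  rw [this, Set.ncard_image_of_injective _ Sum.inl_injective]

variable [Unique W]

lemma ncard_joinGraph_bot_neighbors_inl_of_ne {v : V} {c : α} (hc : c ≠ φ (.inr default)) :
    {u | (joinGraph G (⊥ : SimpleGraph W)).Adj (.inl v) u ∧ φ u = c}.ncard =
      {u | G.Adj v u ∧ φ (.inl u) = c}.ncard := by
  have : {u | (joinGraph G (⊥ : SimpleGraph W)).Adj (.inl v) u ∧ φ u = c} =
      Sum.inl '' {u | G.Adj v u ∧ φ (.inl u) = c} := by
    ext (u | u)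
    · simp [joinGraph]
    · simp [Unique.eq_default u, Ne.symm hc]
  rw [this, Set.ncard_image_of_injective _ Sum.inl_injective]

lemma ncard_joinGraph_bot_neighbors_inl_hub_color (hφ : ∀ v, φ (.inl v) ≠ φ (.inr default))
    (v : V) :
    {u | (joinGraph G (⊥ : SimpleGraph W)).Adj (.inl v) u ∧ φ u = φ (.inr default)}.ncard =
      1 := by
  rw [Set.ncard_eq_one]
  refine ⟨.inr default, ?_⟩
  ext (u | u)
  · simp [hφ]
  · simp [joinGraph, Unique.eq_default u]

theorem isStrongOddColoring_joinGraph_bot_iff :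
    IsStrongOddColoring (joinGraph G (⊥ : SimpleGraph W)) φ ↔
      (∀ v, φ (.inl v) ≠ φ (.inr default)) ∧ IsStrongOddColoring G (φ ∘ Sum.inl) ∧
        ∀ c, {v | φ (.inl v) = c}.ncard = 0 ∨ Odd {v | φ (.inl v) = c}.ncard := by
  constructor
  · rintro ⟨hproper, hodd⟩
    have hhub : ∀ v, φ (.inl v) ≠ φ (.inr default) := fun v => hproper _ _ trivial
    refine ⟨hhub, ⟨fun u v huv => hproper _ _ huv, fun v c => ?_⟩, fun c => ?_⟩
    · simp only [Function.comp_apply]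
      by_cases hc : c = φ (.inr default)
      · left
        rw [show {u | G.Adj v u ∧ φ (.inl u) = c} = ∅ from
          Set.eq_empty_of_forall_notMem fun u hu => hhub u (hu.2.trans hc), Set.ncard_empty]
      · rw [← ncard_joinGraph_bot_neighbors_inl_of_ne hc]
        exact hodd (.inl v) c
    · rw [← ncard_joinGraph_bot_neighbors_inr default]
      exact hodd (.inr default) c
  · rintro ⟨hhub, ⟨hproper, hodd⟩, hclass⟩
    refine ⟨?_, ?_⟩
    · rintro (u | u) (v | v) huv
      · exact hproper u v huv
      · exact Unique.eq_default v ▸ hhub u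
      · exact Unique.eq_default u ▸ (hhub v).symm
      · exact huv.elim
    · rintro (v | w) c
      · by_cases hc : c = φ (.inr default)
        · rw [hc, ncard_joinGraph_bot_neighbors_inl_hub_color hhub]
          exact .inr odd_one
        · rw [ncard_joinGraph_bot_neighbors_inl_of_ne hc]
          exact hodd v c
      · rw [ncard_joinGraph_bot_neighbors_inr]
        exact hclass c

end Cone

section Cycle

variable {α : Type*} {n : ℕ} [NeZero n]

lemma cycleGraph_adj_iff_eq_sub_one_or_eq_add_one (hn : 2 ≤ n) {i j : Fin n} :
    (cycleGraph n).Adj i j ↔ j = i - 1 ∨ j = i + 1 := by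
  obtain ⟨m, rfl⟩ : ∃ m, n = m + 2 := ⟨n - 2, by omega⟩
  simpa using Set.ext_iff.mp (cycleGraph_neighborSet (v := i)) j

theorem isStrongOddColoring_cycleGraph_iff (hn : 3 ≤ n) {f : Fin n → α} :
    IsStrongOddColoring (cycleGraph n) f ↔ ∀ i, f i ≠ f (i + 1) ∧ f i ≠ f (i + 2) := by
  have hadj (i j : Fin n) :=
    cycleGraph_adj_iff_eq_sub_one_or_eq_add_one (by omega) (i := i) (j := j)
  constructor
  · rintro ⟨hproper, hodd⟩ i
    refine ⟨hproper _ _ ((hadj _ _).mpr (.inr rfl)), fun h => ?_⟩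
    have hpair : {j | (cycleGraph n).Adj (i + 1) j ∧ f j = f i} = {i, i + 2} := by
      ext j
      simp only [Set.mem_ofPred_eq, hadj, Set.mem_insert_iff, Set.mem_singleton_iff,
        show i + 1 - 1 = i by ring, show i + 1 + 1 = i + 2 by ring]
      constructor
      · exact And.left
      · rintro (rfl | rfl)
        · exact ⟨.inl rfl, rfl⟩
        · exact ⟨.inr rfl, h.symm⟩
    have htwo : (2 : Fin n) ≠ 0 := by
      simp [Fin.ext_iff, Nat.mod_eq_of_lt (show 2 < n by omega)]
    have hne : i ≠ i + 2 := fun h => htwo (by simpa using congrArg (· - i) h.symm)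
    have := hodd (i + 1) (f i)
    rw [hpair, Set.ncard_pair hne] at this
    norm_num at this
  · intro h
    refine ⟨fun i j hij => ?_, fun i c => ?_⟩
    · rcases (hadj i j).mp hij with rfl | rfl
      · simpa using (h (i - 1)).1.symm
      · exact (h i).1
    · have hsub : {j | (cycleGraph n).Adj i j ∧ f j = c}.Subsingleton := by
        rintro j ⟨hj, rfl⟩ k ⟨hk, hjk⟩
        have hsides : f (i - 1) ≠ f (i + 1) := by
          simpa [show i - 1 + 2 = i + 1 by ring] using (h (i - 1)).2
        rw [hadj] at hj hk
        rcases hj with rfl | rfl <;> rcases hk with rfl | rfl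
        all_goals first | rfl | exact absurd hjk hsides | exact absurd hjk.symm hsides
      rcases hsub.eq_empty_or_singleton with hS | ⟨j, hS⟩
      · exact .inl (by rw [hS, Set.ncard_empty])
      · exact .inr (by rw [hS, Set.ncard_singleton]; exact odd_one)

end Cycle

lemma Fin.periodic_one_of_periodic_natCast {α : Type*} {n a : ℕ} [NeZero n] {f : Fin n → α}
    (hcop : a.Coprime n) (hf : Periodic f (a : Fin n)) : Periodic f 1 := by
  rcases (show n = 1 ∨ 1 < n by have := NeZero.ne n; omega) with rfl | hn
  · exact fun x => congrArg f (Subsingleton.elim _ _)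
  · obtain ⟨m, -, hm⟩ := Nat.exists_mul_mod_eq_one_of_coprime hcop hn
    have hinv : m • (a : Fin n) = 1 := by
      rw [nsmul_eq_mul, ← Nat.cast_mul, Fin.ext_iff, Fin.val_natCast, mul_comm, hm,
        Fin.val_one', Nat.mod_eq_of_lt hn]
    simpa [hinv] using hf.nsmul m

lemma four_le_card_image_of_not_three_dvd {α : Type*} [DecidableEq α] {n : ℕ} [NeZero n]
    (h3 : ¬ 3 ∣ n) {f : Fin n → α} (hf : ∀ i, f i ≠ f (i + 1) ∧ f i ≠ f (i + 2)) :
    4 ≤ #(univ.image f) := by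
  by_contra! hlt
  have hper : Periodic f (3 : ℕ) := fun i => by
    have hwindow : {f i, f (i + 1), f (i + 2)} = univ.image f := by
      refine eq_of_subset_of_card_le (fun c hc => ?_) ?_
      · simp only [mem_insert, mem_singleton] at hc
        rcases hc with rfl | rfl | rfl <;> exact mem_image_of_mem f (mem_univ _)
      · have hnext : f (i + 1) ≠ f (i + 2) := by
          simpa [show i + 1 + 1 = i + 2 by ring] using (hf (i + 1)).1
        rw [card_eq_three.mpr ⟨_, _, _, (hf i).1, (hf i).2, hnext, rfl⟩]
        omega
    have hmem : f (i + 3) ∈ ({f i, f (i + 1), f (i + 2)} : Finset α) :=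
      hwindow ▸ mem_image_of_mem f (mem_univ _)
    simp only [mem_insert, mem_singleton] at hmem
    rcases hmem with h | h | h
    · simpa using h
    · exact absurd h.symm (by simpa [show i + 1 + 2 = i + 3 by ring] using (hf (i + 1)).2)
    · exact absurd h.symm (by simpa [show i + 2 + 1 = i + 3 by ring] using (hf (i + 2)).1)
  have hcop : Nat.Coprime 3 n := (Nat.Prime.coprime_iff_not_dvd Nat.prime_three).mpr h3
  exact (hf 0).1 (Fin.periodic_one_of_periodic_natCast hcop hper 0).symm

lemma odd_card_image_iff_odd_card {ι β : Type*} [Fintype ι] [DecidableEq β] {f : ι → β}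
    (hf : ∀ b, {a | f a = b}.ncard = 0 ∨ Odd {a | f a = b}.ncard) :
    Odd #(univ.image f) ↔ Odd (Fintype.card ι) := by
  rw [← card_univ, card_eq_sum_card_image f univ, odd_sum_iff_odd_card_odd,
    filter_true_of_mem fun b hb => ?_]
  obtain ⟨a, -, rfl⟩ := mem_image.mp hb
  have hfiber : {a' | f a' = f a}.ncard = #{a' | f a' = f a} := by
    rw [← Set.ncard_coe_finset, coe_filter_univ]
  have hpos : 0 < #{a' | f a' = f a} := card_pos.mpr ⟨a, by simp⟩
  rcases hfiber ▸ hf (f a) with h | h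
  · omega
  · exact h

theorem six_le_of_isStrongOddColoring_wheelGraph {n k : ℕ} (hn : 3 ≤ n) (hodd : Odd n)
    (h3 : ¬ 3 ∣ n) {φ : Fin n ⊕ Fin 1 → Fin k} (hφ : IsStrongOddColoring (wheelGraph n) φ) :
    6 ≤ k := by
  have : NeZero n := ⟨by omega⟩
  obtain ⟨hhub, hcycle, hclass⟩ := isStrongOddColoring_joinGraph_bot_iff.mp hφ
  have hfour : 4 ≤ #(univ.image (φ ∘ Sum.inl)) :=
    four_le_card_image_of_not_three_dvd h3 ((isStrongOddColoring_cycleGraph_iff hn).mp hcycle)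
  have hoddColors : Odd #(univ.image (φ ∘ Sum.inl)) :=
    (odd_card_image_iff_odd_card hclass).mpr (by simpa using hodd)
  have hle : #(univ.image (φ ∘ Sum.inl)) ≤ k - 1 := by
    calc #(univ.image (φ ∘ Sum.inl)) ≤ #(univ.erase (φ (.inr default))) :=
          card_le_card fun c hc => by
            obtain ⟨v, -, rfl⟩ := mem_image.mp hc
            exact mem_erase.mpr ⟨hhub v, mem_univ _⟩
      _ = k - 1 := by simp
  obtain ⟨r, hr⟩ := hoddColors
  omega

def IsPathSquareColoring {α : Type*} (m : ℕ) (g : ℕ → α) : Prop :=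
  ∀ b < m, ∀ a < b, b ≤ a + 2 → g a ≠ g b

instance {α : Type*} [DecidableEq α] (m : ℕ) (g : ℕ → α) :
    Decidable (IsPathSquareColoring m g) := by
  unfold IsPathSquareColoring; infer_instance

lemma Fin.ne_add_one_and_ne_add_two_of_isPathSquareColoring {α : Type*} {n : ℕ} [NeZero n]
    (hn : 3 ≤ n) {g : ℕ → α} (hg : IsPathSquareColoring (n + 2) (fun a => g (a % n)))
    (i : Fin n) : g i ≠ g ↑(i + 1) ∧ g i ≠ g ↑(i + 2) := by
  have h1 : ((i + 1 : Fin n) : ℕ) = (i + 1) % n := by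
    simp [Fin.val_add, Nat.mod_eq_of_lt (show 1 < n by omega)]
  have h2 : ((i + 2 : Fin n) : ℕ) = (i + 2) % n := by
    simp [Fin.val_add, Nat.mod_eq_of_lt (show 2 < n by omega)]
  have hi : (i : ℕ) % n = i := Nat.mod_eq_of_lt i.isLt
  refine ⟨?_, ?_⟩
  · simpa [h1, hi] using hg (i + 1) (by omega) i (by omega) (by omega)
  · simpa [h2, hi] using hg (i + 2) (by omega) i (by omega) (by omega)

lemma List.count_eq_sum_range_getD {α : Type*} [DecidableEq α] (l : List α) (d c : α) :
    l.count c = ∑ j ∈ Finset.range l.length, if l.getD j d = c then 1 else 0 := by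
  induction l with
  | nil => simp
  | cons a l ih =>
    rw [List.count_cons, List.length_cons, Finset.sum_range_succ', ih]
    simp

def rimColoring (p : ℕ) (t : List (Fin 6)) (a : ℕ) : Fin 6 :=
  if a < p then ⟨a % 3, by omega⟩ else t.getD (a - p) 0

section Rim

variable {p : ℕ} {t : List (Fin 6)}

/-- The periodic part ends in `1, 2` and, cyclically, starts again with `0, 1`. -/
lemma rimColoring_window (hp : 3 ∣ p) (hp0 : 0 < p) {j : ℕ} (hj : j < t.length + 4) :
    rimColoring p t ((p - 2 + j) % (p + t.length)) = ([1, 2] ++ t ++ [0, 1]).getD j 0 := by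
  obtain ⟨k, rfl⟩ := hp
  by_cases h2 : j < 2
  · rw [Nat.mod_eq_of_lt (by omega), rimColoring, if_pos (by omega), List.append_assoc,
      List.getD_append _ _ _ _ (by simpa using h2)]
    interval_cases j
    · ext; change (3 * k - 2 + 0) % 3 = 1; omega
    · ext; change (3 * k - 2 + 1) % 3 = 2; omega
  by_cases hL : j < t.length + 2
  · rw [Nat.mod_eq_of_lt (by omega), rimColoring, if_neg (by omega), List.append_assoc,
      List.getD_append_right _ _ _ _ (by simp only [List.length_cons, List.length_nil]; omega),
      List.getD_append _ _ _ _ (by simp only [List.length_cons, List.length_nil]; omega)]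
    congr 1
    simp only [List.length_cons, List.length_nil]; omega
  · obtain ⟨r, hr, rfl⟩ : ∃ r < 2, j = t.length + 2 + r := ⟨j - t.length - 2, by omega, by omega⟩
    rw [show 3 * k - 2 + (t.length + 2 + r) = r + (3 * k + t.length) by omega, Nat.add_mod_right,
      Nat.mod_eq_of_lt (by omega), rimColoring, if_pos (by omega),
      List.getD_append_right _ _ _ _ (by simp),
      show t.length + 2 + r - ([1, 2] ++ t : List (Fin 6)).length = r by simp]
    interval_cases r <;> rfl

lemma isPathSquareColoring_rimColoring (hp : 3 ∣ p) (hp0 : 0 < p)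
    (ht : IsPathSquareColoring (t.length + 4) (([1, 2] ++ t ++ [0, 1]).getD · 0)) :
    IsPathSquareColoring (p + t.length + 2) (fun a => rimColoring p t (a % (p + t.length))) := by
  intro b hb a hab hba
  beta_reduce
  by_cases hbp : b < p
  · rw [Nat.mod_eq_of_lt (by omega), Nat.mod_eq_of_lt (by omega), rimColoring, rimColoring,
      if_pos (by omega), if_pos hbp, Ne, Fin.mk.injEq]
    omega
  · have := ht (b + 2 - p) (by omega) (a + 2 - p) (by omega) (by omega)
    beta_reduce at this
    rwa [← rimColoring_window hp hp0 (by omega), ← rimColoring_window hp hp0 (by omega),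
      show p - 2 + (a + 2 - p) = a by omega, show p - 2 + (b + 2 - p) = b by omega] at this

lemma even_card_filter_range_mod_three (hp : 6 ∣ p) (r : ℕ) :
    Even #{a ∈ range p | a % 3 = r} := by
  obtain ⟨k, rfl⟩ := hp
  rw [show 6 * k = 3 * k + 3 * k by ring, card_filter, sum_range_add]
  simp only [Nat.mul_add_mod_self_left]
  exact ⟨_, rfl⟩

lemma ncard_rimColoring_eq (c : Fin 6) :
    {i : Fin (p + t.length) | rimColoring p t i = c}.ncard =
      #{a ∈ range p | a % 3 = (c : ℕ)} + t.count c := by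
  rw [Set.ncard_eq_toFinset_card', Set.toFinset_ofPred, card_filter,
    Fin.sum_univ_eq_sum_range (fun a => if rimColoring p t a = c then 1 else 0), sum_range_add,
    card_filter, List.count_eq_sum_range_getD t 0]
  congr 1
  · refine sum_congr rfl fun a ha => ?_
    simp [rimColoring, mem_range.mp ha, Fin.ext_iff]
  · simp [rimColoring]

end Rim

theorem exists_isStrongOddColoring_wheelGraph {n p : ℕ} (t : List (Fin 6))
    (hn : n = p + t.length) (hp : 6 ∣ p) (hp0 : 0 < p)
    (ht : IsPathSquareColoring (t.length + 4) (([1, 2] ++ t ++ [0, 1]).getD · 0))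
    (ht5 : 5 ∉ t) (htcount : ∀ c ≠ 5, Odd (t.count c)) :
    ∃ φ : Fin n ⊕ Fin 1 → Fin 6, IsStrongOddColoring (wheelGraph n) φ := by
  subst hn
  have : NeZero (p + t.length) := ⟨by omega⟩
  have hp3 : 3 ∣ p := Nat.dvd_trans (by norm_num) hp
  refine ⟨Sum.elim (fun i => rimColoring p t i) (fun _ => 5),
    isStrongOddColoring_joinGraph_bot_iff.mpr ⟨fun i => ?_, ?_, fun c => ?_⟩⟩
  · simp only [Sum.elim_inl, Sum.elim_inr, rimColoring]
    split_ifs with hi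
    · rw [Ne, Fin.ext_iff]; change (i : ℕ) % 3 ≠ 5; omega
    · rw [List.getD_eq_getElem _ _ (by omega)]
      exact fun h => ht5 (h ▸ List.getElem_mem _)
  · exact (isStrongOddColoring_cycleGraph_iff (by omega)).mpr
      (Fin.ne_add_one_and_ne_add_two_of_isPathSquareColoring (by omega)
        (isPathSquareColoring_rimColoring hp3 hp0 ht))
  · simp only [Sum.elim_inl, ncard_rimColoring_eq]
    by_cases hc : c = 5
    · subst hc
      left
      rw [List.count_eq_zero.mpr ht5, add_zero, card_eq_zero, filter_eq_empty_iff]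
      intro a _
      change ¬ a % 3 = 5; omega
    · exact .inr ((even_card_filter_range_mod_three hp c).add_odd (htcount c hc))

/-- If `n > 8` and `n ≡ 1` or `5 (mod 6)`, then the strong odd chromatic number of the
wheel `W_n = C_n ∨ K_1` equals `6`. -/
theorem stmt_5 (n : ℕ) (hn : 8 < n) (hmod : n % 6 = 1 ∨ n % 6 = 5) :
    strongOddChromaticNumber (wheelGraph n) = 6 := by
  have hcolorable : ∃ φ : Fin n ⊕ Fin 1 → Fin 6, IsStrongOddColoring (wheelGraph n) φ := by
    rcases hmod with h | h
    · exact exists_isStrongOddColoring_wheelGraph (p := n - 7) [4, 0, 1, 4, 2, 3, 4]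
        (by simp only [List.length_cons, List.length_nil]; omega) (by omega) (by omega) (by decide) (by decide) (by decide)
    · exact exists_isStrongOddColoring_wheelGraph (p := n - 5) [0, 3, 1, 2, 4]
        (by simp only [List.length_cons, List.length_nil]; omega) (by omega) (by omega) (by decide) (by decide) (by decide)
  refine le_antisymm (Nat.sInf_le hcolorable) (le_csInf ⟨6, hcolorable⟩ ?_)
  rintro k ⟨φ, hφ⟩
  exact six_le_of_isStrongOddColoring_wheelGraph (by omega) (Nat.odd_iff.mpr (by omega))
    (by omega) hφ
end

section
/- For n ≥ 3 and m ≥ 1, if m is odd then χ_so(C_n ∨ K̄_m) = χ_so(W_n), and if m is even then χ_so(C_n ∨ K̄_m) = χ_so(W_n) + 1, where W_n = C_n ∨ K_1. -/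
open SimpleGraph

/-! In `G ∨ K̄_W` every vertex of `G` sees all of `K̄_W` and vice versa, so a coloring is strong odd
exactly when its colors on the two sides are disjoint, it restricts to a strong odd coloring of `G`
all of whose color classes are odd, and its color classes on `K̄_W` are odd. Only the last
condition involves `W`. If `|W|` is odd, a single color on `K̄_W` works exactly as for `K_1`. If
`|W|` is even, `K̄_W` needs at least two colors; collapsing it to one vertex frees one of them, and
conversely a coloring of `G ∨ K_1` extends by giving one vertex of `K̄_W` a fresh color. -/

open Function

variable {V W W' α β : Type*}

def HasOddFibers (f : W → α) : Prop :=
  ∀ c, {x | f x = c}.ncard = 0 ∨ Odd {x | f x = c}.ncard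

def StrongOddColorable (G : SimpleGraph V) (k : ℕ) : Prop :=
  ∃ φ : V → Fin k, IsStrongOddColoring G φ

lemma hasOddFibers_const (hW : Odd (Nat.card W)) (c : α) : HasOddFibers fun _ : W => c := by
  intro d
  by_cases hcd : c = d
  · simp [hcd, hW]
  · simp [hcd]

lemma hasOddFibers_update_const [Finite W] [DecidableEq W] (hW : Even (Nat.card W)) (w₀ : W)
    {c₁ c₂ : α} (hc : c₁ ≠ c₂) : HasOddFibers (update (fun _ : W => c₂) w₀ c₁) := by
  intro c
  by_cases h₁ : c = c₁
  · subst h₁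
    have : {w | update (fun _ : W => c₂) w₀ c w = c} = {w₀} := by
      ext w; by_cases hw : w = w₀ <;> simp [update_apply, hw, hc.symm]
    simp [this]
  by_cases h₂ : c = c₂
  · subst h₂
    have : {w | update (fun _ : W => c) w₀ c₁ w = c} = {w₀}ᶜ := by
      ext w; by_cases hw : w = w₀ <;> simp [update_apply, hw, hc]
    right
    rw [this, Set.ncard_compl, Set.ncard_singleton]
    exact Nat.Even.sub_odd (Nat.card_pos_iff.2 ⟨⟨w₀⟩, ‹_›⟩) hW odd_one
  · left
    have : {w | update (fun _ : W => c₂) w₀ c₁ w = c} = ∅ := by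
      ext w; by_cases hw : w = w₀ <;> simp [update_apply, hw, Ne.symm h₁, Ne.symm h₂]
    simp [this]

lemma HasOddFibers.exists_ne [Finite W] [Nonempty W] {f : W → α} (hf : HasOddFibers f)
    (hW : Even (Nat.card W)) : ∃ i j, f i ≠ f j := by
  by_contra! hconst
  obtain ⟨w⟩ := ‹Nonempty W›
  have huniv : {x | f x = f w} = Set.univ := Set.eq_univ_of_forall fun x => hconst x w
  have hpos : 0 < Nat.card W := Nat.card_pos
  rcases hf (f w) with h | h <;> rw [huniv, Set.ncard_univ] at h
  · omega
  · exact Nat.not_even_iff_odd.2 h hW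

lemma isStrongOddColoring_comp_iff {G : SimpleGraph V} {φ : V → α} {f : α → β}
    (hf : Injective f) : IsStrongOddColoring G (f ∘ φ) ↔ IsStrongOddColoring G φ := by
  refine ⟨fun ⟨hprop, hodd⟩ => ⟨fun u v huv => (hprop u v huv <| congrArg f ·), fun v c => ?_⟩,
    fun ⟨hprop, hodd⟩ => ⟨fun u v huv => hf.ne (hprop u v huv), fun v d => ?_⟩⟩
  · simpa only [comp_apply, hf.eq_iff] using hodd v (f c)
  · by_cases hd : d ∈ Set.range f
    · obtain ⟨c, rfl⟩ := hd
      simpa only [comp_apply, hf.eq_iff] using hodd v c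
    · left
      have : {u | G.Adj v u ∧ (f ∘ φ) u = d} = ∅ :=
        Set.eq_empty_of_forall_notMem fun u hu => hd ⟨φ u, hu.2⟩
      rw [this, Set.ncard_empty]

lemma isStrongOddColoring_of_injective (G : SimpleGraph V) {φ : V → α} (hφ : Injective φ) :
    IsStrongOddColoring G φ := by
  refine ⟨fun u v huv h => huv.ne (hφ h), fun v c => ?_⟩
  have : {u | G.Adj v u ∧ φ u = c}.Subsingleton := fun u hu w hw => hφ (hu.2.trans hw.2.symm)
  rcases this.eq_empty_or_singleton with h | ⟨u, h⟩ <;> simp [h]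

lemma strongOddColorable_natCard [Finite V] (G : SimpleGraph V) :
    StrongOddColorable G (Nat.card V) :=
  ⟨Finite.equivFin V, isStrongOddColoring_of_injective G (Finite.equivFin V).injective⟩

lemma not_strongOddColorable_zero [Nonempty V] (G : SimpleGraph V) : ¬StrongOddColorable G 0 :=
  fun ⟨φ, _⟩ => (φ (Classical.arbitrary V)).elim0

lemma strongOddColorable_of_forall_ne {G : SimpleGraph V} {k : ℕ} {φ : V → Fin (k + 1)}
    (hφ : IsStrongOddColoring G φ) {c₀ : Fin (k + 1)} (hc₀ : ∀ v, φ v ≠ c₀) :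
    StrongOddColorable G k := by
  choose ψ hψ using fun v => Fin.exists_succAbove_eq (hc₀ v)
  refine ⟨ψ, (isStrongOddColoring_comp_iff (Fin.succAbove_right_injective (p := c₀))).1 ?_⟩
  rwa [show c₀.succAbove ∘ ψ = φ from funext hψ]

lemma strongOddChromaticNumber_congr {G : SimpleGraph V} {H : SimpleGraph W}
    (h : ∀ k, StrongOddColorable G k ↔ StrongOddColorable H k) :
    strongOddChromaticNumber G = strongOddChromaticNumber H :=
  congrArg sInf (Set.ext h)

lemma strongOddChromaticNumber_eq_add_one [Nonempty V] [Finite W] {G : SimpleGraph V}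
    {H : SimpleGraph W} (h : ∀ k, StrongOddColorable G (k + 1) ↔ StrongOddColorable H k) :
    strongOddChromaticNumber G = strongOddChromaticNumber H + 1 := by
  have hpos : 1 ≤ sInf {k | StrongOddColorable G k} := by
    rw [Nat.one_le_iff_ne_zero, Ne, Nat.sInf_eq_zero, not_or]
    exact ⟨not_strongOddColorable_zero G,
      Set.nonempty_iff_ne_empty.1 ⟨_, (h _).2 (strongOddColorable_natCard H)⟩⟩
  change sInf {k | StrongOddColorable G k} = _
  rw [← Nat.sInf_add hpos]
  exact congrArg (sInf · + 1) (Set.ext h)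

lemma zero_or_odd_add_iff {a b : ℕ} (h : a = 0 ∨ b = 0) :
    (a + b = 0 ∨ Odd (a + b)) ↔ (a = 0 ∨ Odd a) ∧ (b = 0 ∨ Odd b) := by
  rcases h with rfl | rfl <;> simp

lemma ncard_image_inl_union_image_inr [Finite V] [Finite W] (s : Set V) (t : Set W) :
    (Sum.inl '' s ∪ Sum.inr '' t : Set (V ⊕ W)).ncard = s.ncard + t.ncard := by
  rw [Set.ncard_union_eq Set.disjoint_image_inl_image_inr,
    Set.ncard_image_of_injective _ Sum.inl_injective,
    Set.ncard_image_of_injective _ Sum.inr_injective]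

section JoinBot

variable {G : SimpleGraph V} {φ : V ⊕ W → α}

lemma setOf_joinGraph_bot_adj_inl_and_eq (a : V) (c : α) :
    {u | (joinGraph G (⊥ : SimpleGraph W)).Adj (Sum.inl a) u ∧ φ u = c} =
      Sum.inl '' {b | G.Adj a b ∧ φ (Sum.inl b) = c} ∪ Sum.inr '' {w | φ (Sum.inr w) = c} := by
  ext (b | w) <;> simp [joinGraph]

lemma setOf_joinGraph_bot_adj_inr_and_eq (w : W) (c : α) :
    {u | (joinGraph G (⊥ : SimpleGraph W)).Adj (Sum.inr w) u ∧ φ u = c} =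
      Sum.inl '' {a | φ (Sum.inl a) = c} := by
  ext (b | w') <;> simp [joinGraph]

variable [Finite V] [Finite W] [Nonempty V] [Nonempty W]

theorem isStrongOddColoring_joinGraph_bot_iff_s8 :
    IsStrongOddColoring (joinGraph G (⊥ : SimpleGraph W)) φ ↔
      IsStrongOddColoring G (φ ∘ Sum.inl) ∧ HasOddFibers (φ ∘ Sum.inl) ∧
        (∀ a w, φ (Sum.inl a) ≠ φ (Sum.inr w)) ∧ HasOddFibers (φ ∘ Sum.inr) := by
  have hcard_inl (a : V) (c : α) :
      {u | (joinGraph G ⊥).Adj (Sum.inl a) u ∧ φ u = c}.ncard =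
        {b | G.Adj a b ∧ φ (Sum.inl b) = c}.ncard + {w : W | φ (Sum.inr w) = c}.ncard := by
    rw [setOf_joinGraph_bot_adj_inl_and_eq, ncard_image_inl_union_image_inr]
  have hcard_inr (w : W) (c : α) :
      {u | (joinGraph G ⊥).Adj (Sum.inr w) u ∧ φ u = c}.ncard = {a | φ (Sum.inl a) = c}.ncard := by
    rw [setOf_joinGraph_bot_adj_inr_and_eq, Set.ncard_image_of_injective _ Sum.inl_injective]
  have hsplit (hdisj : ∀ a w, φ (Sum.inl a) ≠ φ (Sum.inr w)) (a : V) (c : α) :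
      {b | G.Adj a b ∧ φ (Sum.inl b) = c}.ncard = 0 ∨ {w : W | φ (Sum.inr w) = c}.ncard = 0 := by
    refine or_iff_not_imp_left.2 fun h => ?_
    obtain ⟨b, -, hb⟩ := Set.nonempty_of_ncard_ne_zero h
    exact (Set.ncard_eq_zero).2
      (Set.eq_empty_of_forall_notMem fun w hw => hdisj b w (hb.trans (Eq.symm hw)))
  constructor
  · rintro ⟨hprop, hodd⟩
    have hdisj : ∀ a w, φ (Sum.inl a) ≠ φ (Sum.inr w) := fun a w => hprop _ _ trivial
    have hodd_inl a c := (zero_or_odd_add_iff (hsplit hdisj a c)).1 (hcard_inl a c ▸ hodd _ c)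
    exact ⟨⟨fun a b hab => hprop _ _ hab, fun a c => (hodd_inl a c).1⟩,
      fun c => hcard_inr (Classical.arbitrary W) c ▸ hodd _ c, hdisj,
      fun c => (hodd_inl (Classical.arbitrary V) c).2⟩
  · rintro ⟨⟨hprop, hodd⟩, hfib_inl, hdisj, hfib_inr⟩
    refine ⟨?_, ?_⟩
    · rintro (a | w) (b | w') h
      · exact hprop a b h
      · exact hdisj a w'
      · exact (hdisj b w).symm
      · exact h.elim
    · rintro (a | w) c
      · rw [hcard_inl]
        exact (zero_or_odd_add_iff (hsplit hdisj a c)).2 ⟨hodd a c, hfib_inr c⟩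
      · rw [hcard_inr]
        exact hfib_inl c

theorem IsStrongOddColoring.joinGraph_bot_elim_const [Finite W']
    (hφ : IsStrongOddColoring (joinGraph G (⊥ : SimpleGraph W)) φ) (hW' : Odd (Nat.card W'))
    (w : W) :
    IsStrongOddColoring (joinGraph G (⊥ : SimpleGraph W'))
      (Sum.elim (φ ∘ Sum.inl) fun _ => φ (Sum.inr w)) := by
  have : Nonempty W' := (Nat.card_pos_iff.1 hW'.pos).1
  obtain ⟨hG, hfib, hdisj, -⟩ := isStrongOddColoring_joinGraph_bot_iff_s8.1 hφ
  exact isStrongOddColoring_joinGraph_bot_iff_s8.2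
    ⟨hG, hfib, fun a _ => hdisj a w, hasOddFibers_const hW' _⟩

end JoinBot

section JoinBotNumber

variable [Finite V] [Nonempty V] [Finite W] [Finite W'] (G : SimpleGraph V)

lemma StrongOddColorable.joinGraph_bot_of_odd [Nonempty W] {k : ℕ}
    (h : StrongOddColorable (joinGraph G (⊥ : SimpleGraph W)) k) (hW' : Odd (Nat.card W')) :
    StrongOddColorable (joinGraph G (⊥ : SimpleGraph W')) k :=
  let ⟨_, hφ⟩ := h
  ⟨_, hφ.joinGraph_bot_elim_const hW' (Classical.arbitrary W)⟩

theorem strongOddChromaticNumber_joinGraph_bot_of_odd (hW : Odd (Nat.card W))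
    (hW' : Odd (Nat.card W')) :
    strongOddChromaticNumber (joinGraph G (⊥ : SimpleGraph W)) =
      strongOddChromaticNumber (joinGraph G (⊥ : SimpleGraph W')) := by
  have : Nonempty W := (Nat.card_pos_iff.1 hW.pos).1
  have : Nonempty W' := (Nat.card_pos_iff.1 hW'.pos).1
  exact strongOddChromaticNumber_congr fun k =>
    ⟨fun h => h.joinGraph_bot_of_odd G hW', fun h => h.joinGraph_bot_of_odd G hW⟩

lemma strongOddColorable_joinGraph_bot_succ_iff [Nonempty W] (hW : Even (Nat.card W))
    (hW' : Odd (Nat.card W')) (k : ℕ) :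
    StrongOddColorable (joinGraph G (⊥ : SimpleGraph W)) (k + 1) ↔
      StrongOddColorable (joinGraph G (⊥ : SimpleGraph W')) k := by
  classical
  have : Nonempty W' := (Nat.card_pos_iff.1 hW'.pos).1
  constructor
  · rintro ⟨φ, hφ⟩
    obtain ⟨-, -, hdisj, hfib⟩ := isStrongOddColoring_joinGraph_bot_iff_s8.1 hφ
    obtain ⟨i, j, hij⟩ := hfib.exists_ne hW
    refine strongOddColorable_of_forall_ne (hφ.joinGraph_bot_elim_const hW' i)
      (c₀ := φ (Sum.inr j)) ?_
    rintro (a | _)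
    · exact hdisj a j
    · exact hij
  · rintro ⟨ψ, hψ⟩
    obtain ⟨hG, hfib, hdisj, -⟩ := isStrongOddColoring_joinGraph_bot_iff_s8.1
      ((isStrongOddColoring_comp_iff (Fin.castSucc_injective k)).2 hψ)
    obtain ⟨w'⟩ := ‹Nonempty W'›
    obtain ⟨w₀⟩ := ‹Nonempty W›
    -- `|W| - 1` is odd: the hub color of `ψ` on all but one vertex of `K̄_W`, a fresh one on it.
    refine ⟨Sum.elim (Fin.castSucc ∘ ψ ∘ Sum.inl)
        (update (fun _ => (ψ (Sum.inr w')).castSucc) w₀ (Fin.last k)),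
      isStrongOddColoring_joinGraph_bot_iff_s8.2
        ⟨hG, hfib, fun a w => ?_, hasOddFibers_update_const hW w₀ (Fin.castSucc_lt_last _).ne'⟩⟩
    by_cases hw : w = w₀
    · simp [hw, (Fin.castSucc_lt_last _).ne]
    · simpa [hw] using hdisj a w'

theorem strongOddChromaticNumber_joinGraph_bot_of_even [Nonempty W] (hW : Even (Nat.card W))
    (hW' : Odd (Nat.card W')) :
    strongOddChromaticNumber (joinGraph G (⊥ : SimpleGraph W)) =
      strongOddChromaticNumber (joinGraph G (⊥ : SimpleGraph W')) + 1 :=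
  strongOddChromaticNumber_eq_add_one (strongOddColorable_joinGraph_bot_succ_iff G hW hW')

end JoinBotNumber

/-- For `n ≥ 3` and `m ≥ 1`: if `m` is odd then
`χ_so(C_n ∨ K̄_m) = χ_so(W_n)`, and if `m` is even then
`χ_so(C_n ∨ K̄_m) = χ_so(W_n) + 1`. -/
theorem stmt_8 (n m : ℕ) (hn : 3 ≤ n) (hm : 1 ≤ m) :
    (Odd m →
      strongOddChromaticNumber (joinGraph (cycleGraph n) (⊥ : SimpleGraph (Fin m))) =
        strongOddChromaticNumber (wheelGraph n)) ∧
    (Even m →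
      strongOddChromaticNumber (joinGraph (cycleGraph n) (⊥ : SimpleGraph (Fin m))) =
        strongOddChromaticNumber (wheelGraph n) + 1) := by
  have : Nonempty (Fin n) := ⟨⟨0, by omega⟩⟩
  have : Nonempty (Fin m) := ⟨⟨0, hm⟩⟩
  have hone : Odd (Nat.card (Fin 1)) := by simp
  refine ⟨fun hodd => ?_, fun heven => ?_⟩
  · exact strongOddChromaticNumber_joinGraph_bot_of_odd _ (by simpa using hodd) hone
  · exact strongOddChromaticNumber_joinGraph_bot_of_even _ (by simpa using heven) hone
end
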